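/- arXiv:2307.15213 — 4 statements merged into one kernel-verified Lean document; each statement's English description precedes it below -/
import Mathlib

section
/- Let X ∈ ℝ^{n×p} have nonzero mean x̄, and let v̄₁ be a first (top) right singular vector of the centered matrix X̄ = X − 1_n x̄ᵀ. If v̄₁ is parallel to x̄, then z₀ = x̄/‖x̄‖ maximizes w ↦ wᵀXᵀXw over the unit sphere in ℝ^p; that is, z₀ is a top eigenvector of XᵀX, so the first right singular vectors of X and X̄ coincide (up to sign) with x̄/‖x̄‖. -/
/-!
Write `X = X̄ + 1 x̄ᵀ`. The columns of `X̄` sum to zero, so `X̄ w ⟂ 1` and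
`‖X w‖² = ‖X̄ w‖² + n (x̄ ⬝ w)²` for every `w`. On the unit sphere the first term is largest at
`v̄₁ = ±z₀` and, by Cauchy–Schwarz, the second at `z₀`; so both are maximized by `z₀` at once.
-/

open Matrix

namespace Matrix

variable {m n R : Type*} [Fintype m]

theorem dotProduct_transpose_mul_self_mulVec [Fintype n] [CommSemiring R] (A : Matrix m n R)
    (w : n → R) :
    w ⬝ᵥ (Aᵀ * A) *ᵥ w = A *ᵥ w ⬝ᵥ A *ᵥ w := by
  rw [← mulVec_mulVec, dotProduct_transpose_mulVec]

theorem dotProduct_sq_le_dotProduct_self_mul [Fintype n] [CommSemiring R] [LinearOrder R]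
    [IsStrictOrderedRing R] [ExistsAddOfLE R] (v w : n → R) :
    (v ⬝ᵥ w) ^ 2 ≤ (v ⬝ᵥ v) * (w ⬝ᵥ w) := by
  simpa only [dotProduct, sq] using Finset.sum_mul_sq_le_sq_mul_sq Finset.univ v w

/-- The mean of the rows of `X` (the paper's `x̄`). -/
def colMean [Field R] (X : Matrix m n R) : n → R :=
  fun j => (∑ i, X i j) / Fintype.card m

theorem one_vecMul_sub_vecMulVec_colMean [Field R] [CharZero R] (X : Matrix m n R) :
    1 ᵥ* (X - vecMulVec 1 X.colMean) = 0 := by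
  ext j
  rw [vecMul_sub, vecMul_vecMulVec, one_dotProduct_one, Pi.sub_apply, Pi.smul_apply, smul_eq_mul,
    Pi.zero_apply, sub_eq_zero, colMean, vecMul, one_dotProduct]
  rcases isEmpty_or_nonempty m with hm | hm
  · simp
  · exact (mul_div_cancel₀ _ (Nat.cast_ne_zero.mpr Fintype.card_ne_zero)).symm

theorem dotProduct_mulVec_add_vecMulVec_one [Fintype n] [CommRing R] {B : Matrix m n R}
    (hB : 1 ᵥ* B = 0) (c w : n → R) :
    w ⬝ᵥ ((B + vecMulVec 1 c)ᵀ * (B + vecMulVec 1 c)) *ᵥ w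
      = w ⬝ᵥ (Bᵀ * B) *ᵥ w + Fintype.card m * (c ⬝ᵥ w) ^ 2 := by
  have hperp : B *ᵥ w ⬝ᵥ 1 = 0 := by
    rw [dotProduct_comm, dotProduct_mulVec, hB, zero_dotProduct]
  simp only [dotProduct_transpose_mul_self_mulVec, add_mulVec, vecMulVec_mulVec, op_smul_eq_smul,
    add_dotProduct, dotProduct_add, smul_dotProduct, dotProduct_smul, hperp, dotProduct_comm 1,
    one_dotProduct_one, smul_eq_mul]
  ring

end Matrix

theorem Real.dotProduct_inv_sqrt_smul_self_sq {n : Type*} [Fintype n] (v : n → ℝ) :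
    (v ⬝ᵥ (√(v ⬝ᵥ v))⁻¹ • v) ^ 2 = v ⬝ᵥ v := by
  have hv : 0 ≤ v ⬝ᵥ v := Finset.sum_nonneg fun i _ => mul_self_nonneg (v i)
  rw [dotProduct_smul, smul_eq_mul, mul_pow, inv_pow, Real.sq_sqrt hv]
  rcases eq_or_ne (v ⬝ᵥ v) 0 with h | h
  · simp [h]
  · field_simp

theorem mean_direction_maximizes_uncentered_rayleigh_general
    {n p : ℕ} (X : Matrix (Fin n) (Fin p) ℝ)
    (xbar : Fin p → ℝ) (hxbar : xbar = fun j => (∑ i, X i j) / n)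
    (Xbar : Matrix (Fin n) (Fin p) ℝ) (hXbar : Xbar = X - Matrix.vecMulVec (fun _ => 1) xbar)
    (z₀ : Fin p → ℝ) (hz₀ : z₀ = (Real.sqrt (xbar ⬝ᵥ xbar))⁻¹ • xbar)
    (vb1 : Fin p → ℝ)
    (hvb1_top : ∀ w : Fin p → ℝ, w ⬝ᵥ w = 1 →
      w ⬝ᵥ (Xbarᵀ * Xbar).mulVec w ≤ vb1 ⬝ᵥ (Xbarᵀ * Xbar).mulVec vb1)
    (hparallel : vb1 = z₀ ∨ vb1 = -z₀) :
    ∀ w : Fin p → ℝ, w ⬝ᵥ w = 1 →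
      w ⬝ᵥ (Xᵀ * X).mulVec w ≤ z₀ ⬝ᵥ (Xᵀ * X).mulVec z₀ := by
  have hmean : xbar = X.colMean := by
    ext j
    rw [hxbar, colMean, Fintype.card_fin]
  have hcentered : 1 ᵥ* Xbar = 0 := by
    rw [hXbar, hmean]
    exact one_vecMul_sub_vecMulVec_colMean X
  have hsplit : ∀ v, v ⬝ᵥ (Xᵀ * X) *ᵥ v = v ⬝ᵥ (Xbarᵀ * Xbar) *ᵥ v + n * (xbar ⬝ᵥ v) ^ 2 := by
    have hX : Xbar + vecMulVec 1 xbar = X := by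
      rw [hXbar]
      exact sub_add_cancel _ _
    intro v
    simpa only [hX, Fintype.card_fin] using dotProduct_mulVec_add_vecMulVec_one hcentered xbar v
  have hvb1 : vb1 ⬝ᵥ (Xbarᵀ * Xbar) *ᵥ vb1 = z₀ ⬝ᵥ (Xbarᵀ * Xbar) *ᵥ z₀ := by
    rcases hparallel with rfl | rfl
    · rfl
    · rw [mulVec_neg, neg_dotProduct, dotProduct_neg, neg_neg]
  intro w hw
  calc w ⬝ᵥ (Xᵀ * X) *ᵥ w = w ⬝ᵥ (Xbarᵀ * Xbar) *ᵥ w + n * (xbar ⬝ᵥ w) ^ 2 := hsplit w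
    _ ≤ vb1 ⬝ᵥ (Xbarᵀ * Xbar) *ᵥ vb1 + n * (xbar ⬝ᵥ xbar) := by
      gcongr
      · exact hvb1_top w hw
      · simpa only [hw, mul_one] using dotProduct_sq_le_dotProduct_self_mul xbar w
    _ = z₀ ⬝ᵥ (Xᵀ * X) *ᵥ z₀ := by
      rw [hsplit, hvb1, hz₀, Real.dotProduct_inv_sqrt_smul_self_sq]

/-- If the top right singular vector `v̄₁` of the centered
matrix `X̄` (a unit maximizer of `w ↦ wᵀX̄ᵀX̄w` over the unit sphere) is
parallel to the nonzero mean `x̄`, then `z₀ = x̄/‖x̄‖` maximizes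
`w ↦ wᵀXᵀXw` over the unit sphere, i.e. it is a top eigenvector of `XᵀX`. -/
theorem mean_direction_maximizes_uncentered_rayleigh
    {n p : ℕ} (hn : 0 < n) (X : Matrix (Fin n) (Fin p) ℝ)
    (xbar : Fin p → ℝ) (hxbar : xbar = fun j => (∑ i, X i j) / n)
    (hx : xbar ≠ 0)
    (Xbar : Matrix (Fin n) (Fin p) ℝ) (hXbar : Xbar = X - Matrix.vecMulVec (fun _ => 1) xbar)
    (z₀ : Fin p → ℝ) (hz₀ : z₀ = (Real.sqrt (xbar ⬝ᵥ xbar))⁻¹ • xbar)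
    (vb1 : Fin p → ℝ) (hvb1_unit : vb1 ⬝ᵥ vb1 = 1)
    (hvb1_top : ∀ w : Fin p → ℝ, w ⬝ᵥ w = 1 →
      w ⬝ᵥ (Xbarᵀ * Xbar).mulVec w ≤ vb1 ⬝ᵥ (Xbarᵀ * Xbar).mulVec vb1)
    (hparallel : vb1 = z₀ ∨ vb1 = -z₀) :
    ∀ w : Fin p → ℝ, w ⬝ᵥ w = 1 →
      w ⬝ᵥ (Xᵀ * X).mulVec w ≤ z₀ ⬝ᵥ (Xᵀ * X).mulVec z₀ :=
  mean_direction_maximizes_uncentered_rayleigh_general X xbar hxbar Xbar hXbar z₀ hz₀ vb1 hvb1_top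
    hparallel
end

section
/- Under the assumption that the top right singular vector v̄₁ of X̄ equals x̄/‖x̄‖, the uncentered matrix X admits the decomposition X = ∑_{i=2}^p σ̄_i ū_i v̄_iᵀ + √(σ̄₁² + n‖x̄‖²) · u* v̄₁ᵀ, where u* = (σ̄₁ū₁ + ‖x̄‖·1_n)/√(σ̄₁² + n‖x̄‖²) is a unit vector. In particular the SVDs of X and X̄ share all right singular vectors and all singular values except the first, which changes from σ̄₁ to √(σ̄₁² + n‖x̄‖²). -/
/-!
Since `v̄₁` is parallel to `x̄`, the mean term `1ₙ x̄ᵀ = ‖x̄‖ 1ₙ v̄₁ᵀ` merges with `σ̄₁ ū₁ v̄₁ᵀ` into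
the rank-one matrix `(σ̄₁ ū₁ + ‖x̄‖ 1ₙ) v̄₁ᵀ`. As `ū₁ ⊥ 1ₙ`, Pythagoras gives the left factor the
squared norm `σ̄₁² + n ‖x̄‖²`, and normalising it yields `u*`.
-/

open Matrix

section

variable {ι : Type*} [Fintype ι]

theorem dotProduct_self_smul_add_smul_of_dotProduct_eq_zero {R : Type*} [CommRing R]
    {u w : ι → R} (a b : R) (h : u ⬝ᵥ w = 0) :
    (a • u + b • w) ⬝ᵥ (a • u + b • w) = a ^ 2 * (u ⬝ᵥ u) + b ^ 2 * (w ⬝ᵥ w) := by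
  have h' : w ⬝ᵥ u = 0 := by rw [dotProduct_comm, h]
  simp only [add_dotProduct, dotProduct_add, smul_dotProduct, dotProduct_smul, h, h',
    smul_eq_mul]
  ring

theorem dotProduct_self_inv_sqrt_smul {w : ι → ℝ} (hw : w ⬝ᵥ w ≠ 0) :
    ((√(w ⬝ᵥ w))⁻¹ • w) ⬝ᵥ ((√(w ⬝ᵥ w))⁻¹ • w) = 1 := by
  have hw₀ : 0 ≤ w ⬝ᵥ w := Finset.sum_nonneg fun i _ => mul_self_nonneg (w i)
  rw [smul_dotProduct, dotProduct_smul, smul_smul, smul_eq_mul, ← sq, inv_pow,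
    Real.sq_sqrt hw₀, inv_mul_cancel₀ hw]

end

section

variable {ι κ K : Type*} [Field K]

theorem smul_vecMulVec_inv_smul {r : K} (hr : r ≠ 0) (u : ι → K) (v : κ → K) :
    r • vecMulVec (r⁻¹ • u) v = vecMulVec u v := by
  rw [smul_vecMulVec, smul_smul, mul_inv_cancel₀ hr, one_smul]

theorem smul_vecMulVec_add_vecMulVec {c : K} (hc : c ≠ 0) (σ : K) (u w : ι → K) (x : κ → K) :
    σ • vecMulVec u (c⁻¹ • x) + vecMulVec w x = vecMulVec (σ • u + c • w) (c⁻¹ • x) := by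
  rw [add_vecMulVec, smul_vecMulVec, smul_vecMulVec, vecMulVec_smul _ w, smul_smul,
    mul_inv_cancel₀ hc, one_smul]

end

theorem svd_uncentered_keeps_all_but_first_general
    {n p : ℕ} (hn : 0 < n) (hp : 0 < p) (X : Matrix (Fin n) (Fin p) ℝ)
    (xbar : Fin p → ℝ)
    (hx : xbar ≠ 0)
    (Xbar : Matrix (Fin n) (Fin p) ℝ) (hXbar : Xbar = X - Matrix.vecMulVec (fun _ => 1) xbar)
    (σb : Fin p → ℝ) (ub : Fin p → Fin n → ℝ) (vb : Fin p → Fin p → ℝ)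
    (hSVD : Xbar = ∑ i, σb i • Matrix.vecMulVec (ub i) (vb i))
    (hu1_unit : ub ⟨0, hp⟩ ⬝ᵥ ub ⟨0, hp⟩ = 1)
    (hu1_ones : ub ⟨0, hp⟩ ⬝ᵥ (fun _ => (1 : ℝ)) = 0)
    (hv1 : vb ⟨0, hp⟩ = (Real.sqrt (xbar ⬝ᵥ xbar))⁻¹ • xbar)
    (ustar : Fin n → ℝ)
    (hustar : ustar = (Real.sqrt (σb ⟨0, hp⟩ ^ 2 + n * (xbar ⬝ᵥ xbar)))⁻¹ •
      (σb ⟨0, hp⟩ • ub ⟨0, hp⟩ + Real.sqrt (xbar ⬝ᵥ xbar) • (fun _ => (1 : ℝ)))) :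
    X = (∑ i ∈ Finset.univ.erase ⟨0, hp⟩, σb i • Matrix.vecMulVec (ub i) (vb i)) +
        Real.sqrt (σb ⟨0, hp⟩ ^ 2 + n * (xbar ⬝ᵥ xbar)) •
          Matrix.vecMulVec ustar (vb ⟨0, hp⟩) ∧
      ustar ⬝ᵥ ustar = 1 := by
  set i₀ : Fin p := ⟨0, hp⟩
  have hxx : 0 < xbar ⬝ᵥ xbar :=
    (Finset.sum_nonneg fun j _ => mul_self_nonneg (xbar j)).lt_of_ne'
      (dotProduct_self_eq_zero.not.mpr hx)
  set w := σb i₀ • ub i₀ + √(xbar ⬝ᵥ xbar) • (fun _ => (1 : ℝ)) with hw_def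
  have hww : w ⬝ᵥ w = σb i₀ ^ 2 + n * (xbar ⬝ᵥ xbar) := by
    rw [hw_def, dotProduct_self_smul_add_smul_of_dotProduct_eq_zero _ _ hu1_ones, hu1_unit,
      Real.sq_sqrt hxx.le, show (fun _ => (1 : ℝ)) = 1 from rfl, one_dotProduct_one,
      Fintype.card_fin]
    ring
  have hw_pos : 0 < w ⬝ᵥ w := by rw [hww]; positivity
  rw [← hww] at hustar ⊢
  subst hustar
  refine ⟨?_, dotProduct_self_inv_sqrt_smul hw_pos.ne'⟩
  rw [smul_vecMulVec_inv_smul (Real.sqrt_ne_zero'.mpr hw_pos),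
    hv1, ← smul_vecMulVec_add_vecMulVec (Real.sqrt_ne_zero'.mpr hxx), ← hv1, ← add_assoc,
    Finset.sum_erase_add _ _ (Finset.mem_univ i₀), ← hSVD, hXbar, sub_add_cancel]

/-- If in the SVD `X̄ = ∑ᵢ σ̄ᵢ ūᵢ v̄ᵢᵀ` of the centered matrix
the top right singular vector satisfies `v̄₁ = x̄/‖x̄‖` (and `ū₁ ⊥ 1ₙ`,
`‖ū₁‖ = 1`, `σ̄₁ ≥ 0`), then the uncentered matrix decomposes as
`X = ∑_{i≥2} σ̄ᵢ ūᵢ v̄ᵢᵀ + √(σ̄₁² + n‖x̄‖²) · u* v̄₁ᵀ` where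
`u* = (σ̄₁ū₁ + ‖x̄‖·1ₙ)/√(σ̄₁² + n‖x̄‖²)` is a unit vector. -/
theorem svd_uncentered_keeps_all_but_first
    {n p : ℕ} (hn : 0 < n) (hp : 0 < p) (X : Matrix (Fin n) (Fin p) ℝ)
    (xbar : Fin p → ℝ) (hxbar : xbar = fun j => (∑ i, X i j) / n)
    (hx : xbar ≠ 0)
    (Xbar : Matrix (Fin n) (Fin p) ℝ) (hXbar : Xbar = X - Matrix.vecMulVec (fun _ => 1) xbar)
    (σb : Fin p → ℝ) (ub : Fin p → Fin n → ℝ) (vb : Fin p → Fin p → ℝ)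
    (hSVD : Xbar = ∑ i, σb i • Matrix.vecMulVec (ub i) (vb i))
    (hσ1 : 0 ≤ σb ⟨0, hp⟩)
    (hu1_unit : ub ⟨0, hp⟩ ⬝ᵥ ub ⟨0, hp⟩ = 1)
    (hu1_ones : ub ⟨0, hp⟩ ⬝ᵥ (fun _ => (1 : ℝ)) = 0)
    (hv1 : vb ⟨0, hp⟩ = (Real.sqrt (xbar ⬝ᵥ xbar))⁻¹ • xbar)
    (ustar : Fin n → ℝ)
    (hustar : ustar = (Real.sqrt (σb ⟨0, hp⟩ ^ 2 + n * (xbar ⬝ᵥ xbar)))⁻¹ •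
      (σb ⟨0, hp⟩ • ub ⟨0, hp⟩ + Real.sqrt (xbar ⬝ᵥ xbar) • (fun _ => (1 : ℝ)))) :
    X = (∑ i ∈ Finset.univ.erase ⟨0, hp⟩, σb i • Matrix.vecMulVec (ub i) (vb i)) +
        Real.sqrt (σb ⟨0, hp⟩ ^ 2 + n * (xbar ⬝ᵥ xbar)) •
          Matrix.vecMulVec ustar (vb ⟨0, hp⟩) ∧
      ustar ⬝ᵥ ustar = 1 :=
  svd_uncentered_keeps_all_but_first_general hn hp X xbar hx Xbar hXbar σb ub vb hSVD hu1_unit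
    hu1_ones hv1 ustar hustar
end

section
/- Fix ε ∈ (0,1) and let U_ε = {u ∈ S^{p−1} : |uᵀz₀| ≥ 1 − ε} where z₀ = x̄/‖x̄‖. If ‖x̄‖² ≥ (σ̄_max² − σ̄_min²)/(n(1 − (1−ε)²)), then every maximizer v₁ of ‖Xz‖ over the unit sphere (i.e., every top right singular vector of the uncentered matrix X) lies in U_ε. -/
/-! Because the columns of `X̄` sum to zero, `X = X̄ + 𝟙 x̄ᵀ` splits the energy as
`‖Xz‖² = zᵀX̄ᵀX̄z + n (x̄ᵀz)²`. Comparing a maximizer `v₁` with the competitor `z₀` gives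
`n (x̄ᵀv₁)² ≥ n ‖x̄‖² - (σ̄_max² - σ̄_min²) ≥ n ‖x̄‖² (1 - ε)²`, i.e. `(v₁ᵀz₀)² ≥ (1 - ε)²`. -/

open Matrix

variable {m ι K : Type*} [Fintype m]

theorem one_vecMul_sub_vecMulVec_mean [Field K] (X : Matrix m ι K)
    (hm : (Fintype.card m : K) ≠ 0) :
    (fun _ => 1) ᵥ* (X - vecMulVec (fun _ => 1) fun j => (∑ i, X i j) / Fintype.card m) = 0 := by
  ext j
  simp [vecMul, dotProduct, vecMulVec_apply, mul_div_cancel₀ _ hm]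

theorem dotProduct_self_add_vecMulVec_mulVec [Fintype ι] [CommRing K] (A : Matrix m ι K)
    (c z : ι → K) (hA : (fun _ => 1) ᵥ* A = 0) :
    ((A + vecMulVec (fun _ => 1) c) *ᵥ z) ⬝ᵥ ((A + vecMulVec (fun _ => 1) c) *ᵥ z) =
      z ⬝ᵥ (Aᵀ * A) *ᵥ z + Fintype.card m * (c ⬝ᵥ z) ^ 2 := by
  have hsum : (fun _ => 1) ⬝ᵥ A *ᵥ z = 0 := by rw [dotProduct_mulVec, hA, zero_dotProduct]
  have hgram : z ⬝ᵥ (Aᵀ * A) *ᵥ z = (A *ᵥ z) ⬝ᵥ (A *ᵥ z) := by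
    rw [← mulVec_mulVec, dotProduct_mulVec, vecMul_transpose]
  have hones : ((fun _ => 1) : m → K) ⬝ᵥ (fun _ => 1) = Fintype.card m := one_dotProduct_one
  rw [add_mulVec, vecMulVec_mulVec, op_smul_eq_smul, hgram]
  simp only [add_dotProduct, dotProduct_add, smul_dotProduct, dotProduct_smul, smul_eq_mul,
    dotProduct_comm (A *ᵥ z), hsum, hones]
  ring

section LinearOrderedRing

variable [Ring K] [LinearOrder K] [IsStrictOrderedRing K]

theorem dotProduct_self_nonneg (v : m → K) : 0 ≤ v ⬝ᵥ v :=
  Fintype.sum_nonneg fun i => mul_self_nonneg (v i)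

theorem dotProduct_self_pos {v : m → K} (hv : v ≠ 0) : 0 < v ⬝ᵥ v :=
  (dotProduct_self_nonneg v).lt_of_ne (Ne.symm (dotProduct_self_eq_zero.not.mpr hv))

end LinearOrderedRing

theorem dotProduct_inv_sqrt_smul_self {x : m → ℝ} (hx : x ≠ 0) :
    ((√(x ⬝ᵥ x))⁻¹ • x) ⬝ᵥ ((√(x ⬝ᵥ x))⁻¹ • x) = 1 := by
  have hpos := dotProduct_self_pos hx
  rw [smul_dotProduct, dotProduct_smul, smul_eq_mul, smul_eq_mul, ← mul_assoc, ← mul_inv,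
    Real.mul_self_sqrt hpos.le, inv_mul_cancel₀ hpos.ne']

theorem sq_dotProduct_inv_sqrt_smul (v x : m → ℝ) :
    (v ⬝ᵥ (√(x ⬝ᵥ x))⁻¹ • x) ^ 2 = (x ⬝ᵥ v) ^ 2 / (x ⬝ᵥ x) := by
  rw [dotProduct_smul, smul_eq_mul, mul_pow, inv_pow, Real.sq_sqrt (dotProduct_self_nonneg x),
    dotProduct_comm v x, inv_mul_eq_div]

theorem card_mul_dotProduct_self_sub_le_of_maximizer [Fintype ι] (A : Matrix m ι ℝ)
    (hA : (fun _ => 1) ᵥ* A = 0) {c : ι → ℝ} (hc : c ≠ 0) {smax smin : ℝ}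
    (hmax : ∀ w : ι → ℝ, w ⬝ᵥ w = 1 → w ⬝ᵥ (Aᵀ * A) *ᵥ w ≤ smax)
    (hmin : ∀ w : ι → ℝ, w ⬝ᵥ w = 1 → smin ≤ w ⬝ᵥ (Aᵀ * A) *ᵥ w)
    {v : ι → ℝ} (hv : v ⬝ᵥ v = 1)
    (hv_max : ∀ z : ι → ℝ, z ⬝ᵥ z = 1 →
      ((A + vecMulVec (fun _ => 1) c) *ᵥ z) ⬝ᵥ ((A + vecMulVec (fun _ => 1) c) *ᵥ z) ≤
        ((A + vecMulVec (fun _ => 1) c) *ᵥ v) ⬝ᵥ ((A + vecMulVec (fun _ => 1) c) *ᵥ v)) :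
    Fintype.card m * (c ⬝ᵥ c) - (smax - smin) ≤ Fintype.card m * (c ⬝ᵥ v) ^ 2 := by
  have hu := dotProduct_inv_sqrt_smul_self hc
  have hcu : (c ⬝ᵥ (√(c ⬝ᵥ c))⁻¹ • c) ^ 2 = c ⬝ᵥ c := by
    rw [sq_dotProduct_inv_sqrt_smul, sq, mul_self_div_self]
  have hcomp := hv_max _ hu
  rw [dotProduct_self_add_vecMulVec_mulVec A c _ hA, dotProduct_self_add_vecMulVec_mulVec A c _ hA,
    hcu] at hcomp
  linarith [hmax v hv, hmin _ hu]

/-- Fix `ε ∈ (0,1)` and let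
`U_ε = {u : ‖u‖ = 1, |uᵀz₀| ≥ 1 − ε}` with `z₀ = x̄/‖x̄‖`.
If `‖x̄‖² ≥ (σ̄_max² − σ̄_min²)/(n(1 − (1−ε)²))`, then every unit maximizer
`v₁` of `‖Xz‖` over the unit sphere (top right singular vector of the
uncentered matrix `X`) satisfies `|v₁ᵀz₀| ≥ 1 − ε`, i.e. `v₁ ∈ U_ε`. -/
theorem top_singular_vector_near_mean_direction
    {n p : ℕ} (hn : 0 < n) (X : Matrix (Fin n) (Fin p) ℝ)
    (xbar : Fin p → ℝ) (hxbar : xbar = fun j => (∑ i, X i j) / n)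
    (hx : xbar ≠ 0)
    (Xbar : Matrix (Fin n) (Fin p) ℝ) (hXbar : Xbar = X - Matrix.vecMulVec (fun _ => 1) xbar)
    (z₀ : Fin p → ℝ) (hz₀ : z₀ = (Real.sqrt (xbar ⬝ᵥ xbar))⁻¹ • xbar)
    (ε : ℝ) (hε : ε ∈ Set.Ioo (0 : ℝ) 1)
    (smax2 smin2 : ℝ)
    (hmax : IsGreatest {r : ℝ | ∃ w : Fin p → ℝ, w ⬝ᵥ w = 1 ∧
      w ⬝ᵥ (Xbarᵀ * Xbar).mulVec w = r} smax2)
    (hmin : IsLeast {r : ℝ | ∃ w : Fin p → ℝ, w ⬝ᵥ w = 1 ∧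
      w ⬝ᵥ (Xbarᵀ * Xbar).mulVec w = r} smin2)
    (hbound : xbar ⬝ᵥ xbar ≥ (smax2 - smin2) / (n * (1 - (1 - ε) ^ 2))) :
    ∀ v₁ : Fin p → ℝ, v₁ ⬝ᵥ v₁ = 1 →
      (∀ z : Fin p → ℝ, z ⬝ᵥ z = 1 →
        (X.mulVec z) ⬝ᵥ (X.mulVec z) ≤ (X.mulVec v₁) ⬝ᵥ (X.mulVec v₁)) →
      |v₁ ⬝ᵥ z₀| ≥ 1 - ε := by
  intro v₁ hv₁ hv₁_max
  have hn_pos : (0 : ℝ) < n := Nat.cast_pos.mpr hn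
  have hcol : (fun _ => 1) ᵥ* Xbar = 0 := by
    have := one_vecMul_sub_vecMulVec_mean X (by simpa using hn_pos.ne')
    simpa [hXbar, hxbar] using this
  have hX : X = Xbar + vecMulVec (fun _ => 1) xbar := by rw [hXbar, sub_add_cancel]
  have halign := card_mul_dotProduct_self_sub_le_of_maximizer Xbar hcol hx
    (fun w hw => hmax.2 ⟨w, hw, rfl⟩) (fun w hw => hmin.2 ⟨w, hw, rfl⟩) hv₁ (hX ▸ hv₁_max)
  rw [Fintype.card_fin] at halign
  have hm := dotProduct_self_pos hx
  have hgap : smax2 - smin2 ≤ n * (1 - (1 - ε) ^ 2) * (xbar ⬝ᵥ xbar) := by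
    have : 0 < 1 - (1 - ε) ^ 2 := by nlinarith [hε.1, hε.2]
    rwa [ge_iff_le, div_le_iff₀ (by positivity), mul_comm] at hbound
  have hsq : (1 - ε) ^ 2 ≤ (v₁ ⬝ᵥ z₀) ^ 2 := by
    rw [hz₀, sq_dotProduct_inv_sqrt_smul, le_div_iff₀ hm]
    nlinarith
  calc 1 - ε ≤ |1 - ε| := le_abs_self _
    _ ≤ |v₁ ⬝ᵥ z₀| := sq_le_sq.mp hsq
end

section
/- Let D, μ, ρ be as in the DPR1 setting (D diagonal with strictly decreasing entries d₁ > ... > d_p, all μ_j ≠ 0, ρ > 0). Then λ is an eigenvalue of D + ρμμᵀ if and only if λ ∉ {d₁,...,d_p} and w(λ) = 1 + ρ∑_{j=1}^p μ_j²/(d_j − λ) = 0; moreover a corresponding eigenvector is (D − λI)^{−1}μ. -/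
open Matrix

/-!
If `(D + ρμμᵀ) v = λ v`, then `(λ - d_i) v_i = ρ (μ ⬝ v) μ_i` for every `i`. At a pole `λ = d_i`
this forces `μ ⬝ v = 0` (as `ρ μ_i ≠ 0`), hence `v_j = 0` for `j ≠ i` (the `d_j` are distinct) and
finally `v_i = 0`. Off the poles, `v_j = ρ (μ ⬝ v) μ_j / (λ - d_j)`, and pairing with `μ` gives
`(μ ⬝ v) w(λ) = 0` with `μ ⬝ v ≠ 0`. Conversely `u = (D - λI)⁻¹μ` has `μ ⬝ u = (w(λ) - 1) / ρ`,
so it solves the equation exactly when `w(λ) = 0`, and then `μ ⬝ u ≠ 0`.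
-/

theorem Matrix.mem_spectrum_iff_exists_mulVec_eq_smul {K n : Type*} [Field K] [Fintype n]
    [DecidableEq n] (A : Matrix n n K) (lam : K) :
    lam ∈ spectrum K A ↔ ∃ v ≠ 0, A *ᵥ v = lam • v := by
  rw [← spectrum_toLin', ← Module.End.hasEigenvalue_iff_mem_spectrum,
    Module.End.hasEigenvalue_iff, Submodule.ne_bot_iff]
  simp only [Module.End.mem_eigenspace_iff, toLin'_apply]
  exact exists_congr fun v => and_comm

section CommRing

variable {R n : Type*} [CommRing R] [Fintype n] [DecidableEq n]

theorem Matrix.diagonal_add_smul_vecMulVec_mulVec (d μ v : n → R) (ρ : R) :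
    (diagonal d + ρ • vecMulVec μ μ) *ᵥ v = fun i => d i * v i + ρ * (μ ⬝ᵥ v) * μ i := by
  ext i
  simp only [add_mulVec, smul_mulVec, mulVec_diagonal, vecMulVec_mulVec, Pi.add_apply,
    Pi.smul_apply, smul_eq_mul, MulOpposite.smul_eq_mul_unop, MulOpposite.unop_op]
  ring

theorem Matrix.diagonal_add_smul_vecMulVec_mulVec_eq_smul_iff (d μ v : n → R) (ρ lam : R) :
    (diagonal d + ρ • vecMulVec μ μ) *ᵥ v = lam • v ↔
      ∀ i, (lam - d i) * v i = ρ * (μ ⬝ᵥ v) * μ i := by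
  rw [diagonal_add_smul_vecMulVec_mulVec, funext_iff]
  refine forall_congr' fun i => ?_
  rw [Pi.smul_apply, smul_eq_mul]
  constructor <;> intro h <;> linear_combination -h

end CommRing

section Field

variable {K n : Type*} [Field K] [Fintype n] {d μ v : n → K} {ρ lam : K}

def secularFun (d μ : n → K) (ρ lam : K) : K :=
  1 + ρ * ∑ j, μ j ^ 2 / (d j - lam)

theorem eq_zero_of_dpr1_eigen_at_pole (hd : Function.Injective d) {i : n} (hμ : μ i ≠ 0)
    (hρ : ρ ≠ 0) (hv : ∀ j, (lam - d j) * v j = ρ * (μ ⬝ᵥ v) * μ j) (hlam : lam = d i) :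
    v = 0 := by
  subst hlam
  have hS : μ ⬝ᵥ v = 0 := by simpa [hρ, hμ] using (hv i).symm
  have hvj : ∀ j, j ≠ i → v j = 0 := fun j hj => by
    have := hv j
    rw [hS, mul_zero, zero_mul] at this
    exact (mul_eq_zero.1 this).resolve_left (sub_ne_zero.2 (hd.ne hj.symm))
  have hvi : v i = 0 := by
    rw [dotProduct, Finset.sum_eq_single i (fun j _ hj => by rw [hvj j hj, mul_zero])
      (by simp)] at hS
    exact (mul_eq_zero.1 hS).resolve_left hμ
  funext j
  by_cases hj : j = i
  · rw [hj, hvi, Pi.zero_apply]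
  · exact hvj j hj

theorem eq_zero_of_dpr1_eigen_of_dotProduct_eq_zero (hlam : ∀ j, lam ≠ d j)
    (hv : ∀ j, (lam - d j) * v j = ρ * (μ ⬝ᵥ v) * μ j)
    (hS : μ ⬝ᵥ v = 0) : v = 0 := by
  funext j
  have := hv j
  rw [hS, mul_zero, zero_mul] at this
  exact (mul_eq_zero.1 this).resolve_left (sub_ne_zero.2 (hlam j))

theorem dotProduct_mul_secularFun_eq_zero_of_dpr1_eigen (hlam : ∀ j, lam ≠ d j)
    (hv : ∀ j, (lam - d j) * v j = ρ * (μ ⬝ᵥ v) * μ j) :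
    (μ ⬝ᵥ v) * secularFun d μ ρ lam = 0 := by
  have key : ∀ j, ρ * (μ ⬝ᵥ v) * (μ j ^ 2 / (d j - lam)) = -(μ j * v j) := fun j => by
    have hdj : d j - lam ≠ 0 := sub_ne_zero.2 (hlam j).symm
    field_simp
    linear_combination (-μ j) * hv j
  calc (μ ⬝ᵥ v) * secularFun d μ ρ lam
      = μ ⬝ᵥ v + ∑ j, ρ * (μ ⬝ᵥ v) * (μ j ^ 2 / (d j - lam)) := by
        rw [secularFun, ← Finset.mul_sum]; ring
    _ = 0 := by
        simp_rw [key]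
        rw [Finset.sum_neg_distrib]
        exact add_neg_cancel _

theorem dotProduct_div_sub (d μ : n → K) (lam : K) :
    μ ⬝ᵥ (fun j => μ j / (d j - lam)) = ∑ j, μ j ^ 2 / (d j - lam) :=
  Finset.sum_congr rfl fun j _ => by ring

theorem div_sub_ne_zero_of_secularFun_eq_zero (hw : secularFun d μ ρ lam = 0) :
    (fun j => μ j / (d j - lam)) ≠ 0 := fun hu => by
  rw [secularFun, ← dotProduct_div_sub, hu, dotProduct_zero, mul_zero, add_zero] at hw
  exact one_ne_zero hw

theorem diagonal_add_smul_vecMulVec_mulVec_div_sub [DecidableEq n] (hlam : ∀ j, lam ≠ d j)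
    (hw : secularFun d μ ρ lam = 0) :
    (diagonal d + ρ • vecMulVec μ μ) *ᵥ (fun j => μ j / (d j - lam))
      = lam • (fun j => μ j / (d j - lam)) := by
  have hρS : ρ * ∑ j, μ j ^ 2 / (d j - lam) = -1 := by
    rw [secularFun] at hw; linear_combination hw
  rw [diagonal_add_smul_vecMulVec_mulVec_eq_smul_iff, dotProduct_div_sub, hρS]
  intro i
  have hdi : d i - lam ≠ 0 := sub_ne_zero.2 (hlam i).symm
  field_simp
  ring

end Field

theorem dpr1_secular_equation_general
    {p : ℕ} (d : Fin p → ℝ) (hd : StrictAnti d)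
    (μ : Fin p → ℝ) (hμ : ∀ j, μ j ≠ 0) (ρ : ℝ) (hρ : 0 < ρ) (lam : ℝ) :
    (lam ∈ spectrum ℝ (Matrix.diagonal d + ρ • Matrix.vecMulVec μ μ) ↔
      ((∀ j, lam ≠ d j) ∧ 1 + ρ * ∑ j, μ j ^ 2 / (d j - lam) = 0)) ∧
    (((∀ j, lam ≠ d j) ∧ 1 + ρ * ∑ j, μ j ^ 2 / (d j - lam) = 0) →
      (Matrix.diagonal d + ρ • Matrix.vecMulVec μ μ).mulVec
          (fun j => μ j / (d j - lam))
        = lam • (fun j => μ j / (d j - lam))) := by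
  refine ⟨?_, fun ⟨hlam, hw⟩ => diagonal_add_smul_vecMulVec_mulVec_div_sub hlam hw⟩
  rw [mem_spectrum_iff_exists_mulVec_eq_smul]
  constructor
  · rintro ⟨v, hv0, hv⟩
    rw [diagonal_add_smul_vecMulVec_mulVec_eq_smul_iff] at hv
    have hlam : ∀ j, lam ≠ d j := fun j hj =>
      hv0 (eq_zero_of_dpr1_eigen_at_pole hd.injective (hμ j) hρ.ne' hv hj)
    have hS : μ ⬝ᵥ v ≠ 0 := fun hS =>
      hv0 (eq_zero_of_dpr1_eigen_of_dotProduct_eq_zero hlam hv hS)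
    exact ⟨hlam, (mul_eq_zero.1
      (dotProduct_mul_secularFun_eq_zero_of_dpr1_eigen hlam hv)).resolve_left hS⟩
  · rintro ⟨hlam, hw⟩
    exact ⟨_, div_sub_ne_zero_of_secularFun_eq_zero hw,
      diagonal_add_smul_vecMulVec_mulVec_div_sub hlam hw⟩

/-- **secular equation for DPR1 matrices.** With `D = diag(d)`,
`d₁ > ... > d_p`, all `μ_j ≠ 0` and `ρ > 0`: `λ` is an eigenvalue of
`D + ρμμᵀ` iff `λ ∉ {d₁,...,d_p}` and the secular function
`w(λ) = 1 + ρ∑_j μ_j²/(d_j − λ)` vanishes at `λ`; moreover, in that case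
`(D − λI)⁻¹μ` (with entries `μ_j/(d_j − λ)`) is a corresponding eigenvector. -/
theorem dpr1_secular_equation
    {p : ℕ} (hp : 2 ≤ p) (d : Fin p → ℝ) (hd : StrictAnti d)
    (μ : Fin p → ℝ) (hμ : ∀ j, μ j ≠ 0) (ρ : ℝ) (hρ : 0 < ρ) (lam : ℝ) :
    (lam ∈ spectrum ℝ (Matrix.diagonal d + ρ • Matrix.vecMulVec μ μ) ↔
      ((∀ j, lam ≠ d j) ∧ 1 + ρ * ∑ j, μ j ^ 2 / (d j - lam) = 0)) ∧
    (((∀ j, lam ≠ d j) ∧ 1 + ρ * ∑ j, μ j ^ 2 / (d j - lam) = 0) →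
      (Matrix.diagonal d + ρ • Matrix.vecMulVec μ μ).mulVec
          (fun j => μ j / (d j - lam))
        = lam • (fun j => μ j / (d j - lam))) :=
  dpr1_secular_equation_general d hd μ hμ ρ hρ lam
end
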